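/- For every natural number k ≥ 1, the number of binary functional graphs of size 2k, i.e., the number of functions f : Fin (2k) → Fin (2k) such that every fiber f⁻¹(y) has cardinality 0 or 2, equals (2k)! · C(2k, k) / 2^k, where C(2k,k) is the central binomial coefficient. -/

import Mathlib

open scoped Classical

def IsBinaryFunGraph {n : ℕ} (f : Fin n → Fin n) : Prop :=
  ∀ y, (Finset.univ.filter fun x => f x = y).card = 0 ∨
       (Finset.univ.filter fun x => f x = y).card = 2

/-!
A binary functional graph of size `2k` is the same as a subset `S` of size `k` (its image)
together with a map onto `S` all of whose fibers have two elements. More generally, the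
permutations of `α` act transitively by precomposition on the maps `α → β` with prescribed fiber
sizes `c`, and the stabilizer of such a map is `∏ b, Perm (f⁻¹ b)`; by orbit–stabilizer there
are `|α|! / ∏ b, (c b)!` of them, which is `(2k)! / 2^k` for each of the `C(2k, k)` images.
-/

open Equiv Finset Nat

section FiberCount

variable {α β : Type*} [Fintype α] [DecidableEq β]

def fiberCard (f : α → β) (b : β) : ℕ := Fintype.card {a // f a = b}

theorem fiberCard_comp_perm (f : α → β) (σ : Perm α) : fiberCard (f ∘ σ) = fiberCard f :=
  funext fun _ => Fintype.card_congr (σ.subtypeEquiv fun _ => Iff.rfl)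

theorem sum_fiberCard [Fintype β] (f : α → β) : ∑ b, fiberCard f b = Fintype.card α :=
  Fintype.card_sigma.symm.trans (Fintype.card_congr (sigmaFiberEquiv f))

theorem exists_fiberCard_eq [Fintype β] (c : β → ℕ) (hc : ∑ b, c b = Fintype.card α) :
    ∃ f : α → β, fiberCard f = c := by
  have e : α ≃ Σ b, Fin (c b) := Fintype.equivOfCardEq (by simp [hc])
  refine ⟨fun a => (e a).1, funext fun b => ?_⟩
  rw [fiberCard, Fintype.card_congr ((e.subtypeEquiv fun _ => Iff.rfl).trans (sigmaSubtype b)),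
    Fintype.card_fin]

theorem exists_perm_comp_eq_of_fiberCard_eq {f g : α → β} (h : fiberCard f = fiberCard g) :
    ∃ σ : Perm α, f ∘ σ = g :=
  ⟨ofFiberEquiv fun b => (Fintype.equivOfCardEq (congrFun h b)).symm,
    funext fun _ => ofFiberEquiv_map _ _⟩

theorem card_perm_comp_eq_of_comp_eq {f g : α → β} {σ₀ : Perm α} (h : f ∘ σ₀ = g) :
    Fintype.card {σ : Perm α // f ∘ σ = g} = Fintype.card {τ : Perm α // f ∘ τ = f} := by
  refine Fintype.card_congr ((Equiv.mulRight σ₀).subtypeEquiv fun τ => ?_).symm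
  rw [← h, Equiv.coe_mulRight, Perm.coe_mul, ← Function.comp_assoc]
  exact σ₀.surjective.injective_comp_right.eq_iff.symm

theorem card_fiberCard_eq_mul_prod_factorial [Fintype β] (c : β → ℕ)
    (hc : ∑ b, c b = Fintype.card α) :
    Fintype.card {f : α → β // fiberCard f = c} * ∏ b, (c b)! = (Fintype.card α)! := by
  obtain ⟨f₀, hf₀⟩ := exists_fiberCard_eq c hc
  let Φ : Perm α → {f : α → β // fiberCard f = c} :=
    fun σ => ⟨f₀ ∘ σ, (fiberCard_comp_perm f₀ σ).trans hf₀⟩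
  have card_preimage (f : {f : α → β // fiberCard f = c}) :
      Fintype.card {σ // Φ σ = f} = ∏ b, (c b)! := by
    obtain ⟨σ₀, hσ₀⟩ := exists_perm_comp_eq_of_fiberCard_eq (hf₀.trans f.2.symm)
    calc Fintype.card {σ // Φ σ = f} = Fintype.card {σ : Perm α // f₀ ∘ σ = f} :=
          Fintype.card_congr (subtypeEquivRight fun _ => Subtype.ext_iff)
      _ = Fintype.card {τ : Perm α // f₀ ∘ τ = f₀} := card_perm_comp_eq_of_comp_eq hσ₀
      _ = ∏ b, (c b)! := by rw [DomMulAct.stabilizer_card, ← hf₀]; rfl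
  calc _ = ∑ f, Fintype.card {σ // Φ σ = f} := by
        simp only [card_preimage, sum_const, Finset.card_univ, smul_eq_mul]
    _ = Fintype.card (Perm α) := by
        rw [← Fintype.card_sigma, Fintype.card_congr (sigmaFiberEquiv Φ)]
    _ = _ := Fintype.card_perm

theorem card_fiberCard_eq_eq_zero [Fintype β] (c : β → ℕ) (hc : ∑ b, c b ≠ Fintype.card α) :
    Fintype.card {f : α → β // fiberCard f = c} = 0 :=
  Fintype.card_eq_zero_iff.mpr ⟨fun f => hc <| by rw [← f.2, sum_fiberCard]⟩

theorem card_fiberCard_zero_or_eq_eq_sum [Fintype β] {m : ℕ} (hm : m ≠ 0) :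
    Fintype.card {f : α → β // ∀ b, fiberCard f b = 0 ∨ fiberCard f b = m} =
      ∑ S : Finset β, Fintype.card {f : α → β // fiberCard f = fun b => if b ∈ S then m else 0} := by
  let support (f : α → β) : Finset β := {b | fiberCard f b = m}
  have fiber_iff (f : α → β) (S : Finset β) :
      ((∀ b, fiberCard f b = 0 ∨ fiberCard f b = m) ∧ support f = S) ↔
        fiberCard f = fun b => if b ∈ S then m else 0 := by
    rw [funext_iff]
    constructor
    · rintro ⟨hf, rfl⟩ b
      have := hf b
      by_cases hb : fiberCard f b = m <;> simp_all [support]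
    · intro hf
      refine ⟨fun b => ?_, ?_⟩
      · rw [hf b]; split_ifs <;> simp
      · ext b; by_cases hb : b ∈ S <;> simp_all [support, Ne.symm hm]
  rw [← Fintype.card_sigma]
  exact Fintype.card_congr <| (sigmaFiberEquiv fun f => support f.1).symm.trans <|
    sigmaCongrRight fun S =>
      (subtypeSubtypeEquivSubtypeInter _ (support · = S)).trans (subtypeEquivRight (fiber_iff · S))

theorem card_fiberCard_zero_or_eq_mul [Fintype β] {m : ℕ} (k : ℕ) (hm : m ≠ 0)
    (hα : Fintype.card α = m * k) :
    Fintype.card {f : α → β // ∀ b, fiberCard f b = 0 ∨ fiberCard f b = m} * (m !) ^ k =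
      (Fintype.card β).choose k * (Fintype.card α)! := by
  rw [card_fiberCard_zero_or_eq_eq_sum hm, sum_mul]
  calc _ = ∑ S : Finset β, if #S = k then (Fintype.card α)! else 0 := by
        refine sum_congr rfl fun S _ => ?_
        have hsum : ∑ b, (if b ∈ S then m else 0) = m * #S := by simp [mul_comm]
        split_ifs with hS
        · have hprod : ∏ b, (if b ∈ S then m else 0)! = (m !) ^ k := by
            simp [apply_ite Nat.factorial, hS]
          rw [← hprod, card_fiberCard_eq_mul_prod_factorial _ (by rw [hsum, hS, hα])]
        · have hne : m * #S ≠ m * k := fun h => hS (Nat.eq_of_mul_eq_mul_left (by omega) h)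
          rw [card_fiberCard_eq_eq_zero _ (by rwa [hsum, hα]), zero_mul]
    _ = _ := by
        rw [sum_ite, sum_const_zero, add_zero, sum_const, smul_eq_mul, ← powerset_univ,
          ← powersetCard_eq_filter, card_powersetCard, Finset.card_univ]

end FiberCount

theorem isBinaryFunGraph_iff {n : ℕ} (f : Fin n → Fin n) :
    IsBinaryFunGraph f ↔ ∀ y, fiberCard f y = 0 ∨ fiberCard f y = 2 := by
  simp only [IsBinaryFunGraph, fiberCard, Fintype.card_subtype]

theorem stmt_4_general (k : ℕ) :
    Fintype.card {f : Fin (2 * k) → Fin (2 * k) // IsBinaryFunGraph f}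
      = Nat.factorial (2 * k) * Nat.choose (2 * k) k / 2 ^ k := by
  have h := card_fiberCard_zero_or_eq_mul (α := Fin (2 * k)) (β := Fin (2 * k)) k two_ne_zero
    (Fintype.card_fin _)
  simp only [Fintype.card_fin, factorial_two] at h
  rw [Fintype.card_congr (subtypeEquivRight isBinaryFunGraph_iff)]
  exact Nat.eq_div_of_mul_eq_left (by positivity) (by convert h.trans (mul_comm _ _))

/-- For every `k ≥ 1`, the number of binary functional graphs of size `2k`
equals `(2k)! · C(2k, k) / 2^k`. -/
theorem stmt_4 (k : ℕ) (hk : 1 ≤ k) :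
    Fintype.card {f : Fin (2 * k) → Fin (2 * k) // IsBinaryFunGraph f}
      = Nat.factorial (2 * k) * Nat.choose (2 * k) k / 2 ^ k :=
  stmt_4_general k
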